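/- arXiv:1110.6746 — 8 statements merged into one kernel-verified Lean document; each statement's English description precedes it below -/
import Mathlib

section
/- In a Hilbert space H, if {y_n} is an alternate dual frame for a frame {x_n}, meaning x = Σ_n ⟨x, y_n⟩ x_n for all x ∈ H and both sequences are frames, then {x_n} is an alternate dual frame for {y_n}, i.e., y = Σ_n ⟨y, x_n⟩ y_n for all y ∈ H. -/
/-!
A Bessel sequence `y` has a bounded analysis operator `T_y : H → ℓ²`, `f ↦ (⟪y n, f⟫)ₙ`, and
its adjoint is the synthesis operator `c ↦ ∑ cₙ • y n`. The reconstruction formula says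
`T_x† ∘ T_y = 1`; taking adjoints gives `T_y† ∘ T_x = 1`, which is the reconstruction formula
with the roles of `x` and `y` exchanged.
-/

def IsFrame {H : Type*} [NormedAddCommGroup H] [InnerProductSpace ℂ H]
    (φ : ℕ → H) : Prop :=
  ∃ A B : ℝ, 0 < A ∧ 0 < B ∧ ∀ f : H,
    Summable (fun n => ‖(inner ℂ (φ n) f : ℂ)‖ ^ 2) ∧
    A * ‖f‖ ^ 2 ≤ ∑' n, ‖(inner ℂ (φ n) f : ℂ)‖ ^ 2 ∧
    ∑' n, ‖(inner ℂ (φ n) f : ℂ)‖ ^ 2 ≤ B * ‖f‖ ^ 2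

open scoped InnerProductSpace InnerProduct lp

section lp

variable {ι : Type*} {E : ι → Type*} [∀ i, NormedAddCommGroup (E i)]

theorem memℓp_two_iff {f : ∀ i, E i} : Memℓp f 2 ↔ Summable fun i => ‖f i‖ ^ 2 := by
  rw [memℓp_gen_iff (by norm_num)]
  norm_num

theorem lp.norm_sq_eq_tsum (f : lp E 2) : ‖f‖ ^ 2 = ∑' i, ‖f i‖ ^ 2 := by
  have := lp.norm_rpow_eq_tsum (p := 2) (by norm_num) f
  norm_num at this
  exact_mod_cast this

end lp

def IsBessel (𝕜 : Type*) {ι H : Type*} [RCLike 𝕜] [NormedAddCommGroup H] [InnerProductSpace 𝕜 H]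
    (y : ι → H) : Prop :=
  ∃ B : ℝ, ∀ f : H, Summable (fun n => ‖⟪y n, f⟫_𝕜‖ ^ 2) ∧ ∑' n, ‖⟪y n, f⟫_𝕜‖ ^ 2 ≤ B * ‖f‖ ^ 2

theorem IsFrame.isBessel {H : Type*} [NormedAddCommGroup H] [InnerProductSpace ℂ H] {φ : ℕ → H}
    (h : IsFrame φ) : IsBessel ℂ φ :=
  let ⟨_, B, _, _, hφ⟩ := h
  ⟨B, fun f => ⟨(hφ f).1, (hφ f).2.2⟩⟩

namespace IsBessel

variable {ι 𝕜 H : Type*} [RCLike 𝕜] [NormedAddCommGroup H] [InnerProductSpace 𝕜 H] {x y : ι → H}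

theorem memℓp_inner (hy : IsBessel 𝕜 y) (f : H) : Memℓp (fun n => ⟪y n, f⟫_𝕜) 2 :=
  let ⟨_, hB⟩ := hy
  memℓp_two_iff.mpr (hB f).1

noncomputable def analysis (hy : IsBessel 𝕜 y) : H →L[𝕜] ℓ²(ι, 𝕜) :=
  LinearMap.mkContinuousOfExistsBound
    { toFun f := ⟨fun n => ⟪y n, f⟫_𝕜, hy.memℓp_inner f⟩
      map_add' f g := by ext n; exact inner_add_right _ _ _
      map_smul' c f := by ext n; exact inner_smul_right _ _ _ }
    (by
      obtain ⟨B, hB⟩ := id hy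
      refine ⟨√B, fun f => ?_⟩
      change ‖(⟨_, hy.memℓp_inner f⟩ : ℓ²(ι, 𝕜))‖ ≤ _
      rw [← Real.sqrt_sq (norm_nonneg _), ← Real.sqrt_sq (norm_nonneg f),
        ← Real.sqrt_mul' _ (sq_nonneg _), lp.norm_sq_eq_tsum]
      exact Real.sqrt_le_sqrt (hB f).2)

@[simp]
theorem analysis_apply (hy : IsBessel 𝕜 y) (f : H) (n : ι) : hy.analysis f n = ⟪y n, f⟫_𝕜 :=
  rfl

variable [CompleteSpace H]

theorem adjoint_analysis_single [DecidableEq ι] (hy : IsBessel 𝕜 y) (n : ι) (c : 𝕜) :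
    (hy.analysis†) (lp.single 2 n c) = c • y n :=
  ext_inner_right 𝕜 fun f => by
    rw [ContinuousLinearMap.adjoint_inner_left, lp.inner_single_left, analysis_apply,
      RCLike.inner_apply', inner_smul_left]

theorem hasSum_adjoint_analysis (hy : IsBessel 𝕜 y) (c : ℓ²(ι, 𝕜)) :
    HasSum (fun n => c n • y n) ((hy.analysis†) c) := by
  classical
  simpa [adjoint_analysis_single] using
    (lp.hasSum_single ENNReal.ofNat_ne_top c).mapL (hy.analysis†)

theorem adjoint_analysis_comp_analysis_eq_id (hx : IsBessel 𝕜 x) (hy : IsBessel 𝕜 y)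
    (hrecon : ∀ f : H, HasSum (fun n => ⟪y n, f⟫_𝕜 • x n) f) :
    hx.analysis† ∘L hy.analysis = .id 𝕜 H :=
  ContinuousLinearMap.ext fun f =>
    (hx.hasSum_adjoint_analysis (hy.analysis f)).unique (hrecon f)

theorem hasSum_dual_symm (hx : IsBessel 𝕜 x) (hy : IsBessel 𝕜 y)
    (hrecon : ∀ f : H, HasSum (fun n => ⟪y n, f⟫_𝕜 • x n) f) (g : H) :
    HasSum (fun n => ⟪x n, g⟫_𝕜 • y n) g := by
  have hswap : hy.analysis† ∘L hx.analysis = .id 𝕜 H := by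
    simpa [ContinuousLinearMap.adjoint_comp, ContinuousLinearMap.adjoint_id] using
      congrArg ContinuousLinearMap.adjoint (adjoint_analysis_comp_analysis_eq_id hx hy hrecon)
  have := hy.hasSum_adjoint_analysis (hx.analysis g)
  rwa [← ContinuousLinearMap.comp_apply, hswap, ContinuousLinearMap.id_apply] at this

end IsBessel

/-- If {y_n} is an alternate dual frame for a frame {x_n}
(both frames, x = Σ_n ⟨x,y_n⟩ x_n for all x), then {x_n} is an alternate dual
frame for {y_n}: y = Σ_n ⟨y,x_n⟩ y_n for all y ∈ H. -/
theorem stmt1 {H : Type*} [NormedAddCommGroup H] [InnerProductSpace ℂ H] [CompleteSpace H]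
    (x y : ℕ → H) (hx : IsFrame x) (hy : IsFrame y)
    (hrecon : ∀ f : H, HasSum (fun n => (inner ℂ (y n) f : ℂ) • x n) f) :
    ∀ g : H, HasSum (fun n => (inner ℂ (x n) g : ℂ) • y n) g :=
  hx.isBessel.hasSum_dual_symm hy.isBessel hrecon
end

section
/- Let {x_n} and {y_n} be frames in a Hilbert space H. Then there exists a bounded invertible operator T : H → H such that {T y_n} is an alternate dual frame for {x_n} if and only if the operator S : H → H defined by S x = Σ_n ⟨x, x_n⟩ y_n is invertible (bounded with bounded inverse). -/
open ContinuousLinearMap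
open scoped InnerProduct lp

local notation "⟪" a ", " b "⟫" => (inner ℂ a b : ℂ)

section

variable {H : Type*} [NormedAddCommGroup H] [InnerProductSpace ℂ H]

lemma IsFrame.memℓp_inner {φ : ℕ → H} (hφ : IsFrame φ) (f : H) :
    Memℓp (fun n => ⟪φ n, f⟫) 2 := by
  obtain ⟨_, _, _, _, h⟩ := hφ
  refine (memℓp_gen_iff (by norm_num)).2 ?_
  simpa using (h f).1

section Analysis

variable [CompleteSpace H] (φ : ℕ → H) (hφ : ∀ f, Memℓp (fun n => ⟪φ n, f⟫) 2)

noncomputable def analysisOp : H →L[ℂ] ℓ²(ℕ, ℂ) :=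
  ContinuousLinearMap.ofSeqClosedGraph (g :=
    { toFun := fun f => ⟨_, hφ f⟩
      map_add' := fun _ _ => lp.ext <| funext fun _ => inner_add_right _ _ _
      map_smul' := fun _ _ => lp.ext <| funext fun _ => inner_smul_right _ _ _ })
    fun _ f c hu hc => lp.ext <| funext fun n =>
      tendsto_nhds_unique (((lp.evalCLM ℂ (fun _ : ℕ => ℂ) 2 n).continuous.tendsto c).comp hc)
        (((innerSL ℂ (φ n)).continuous.tendsto f).comp hu)

@[simp]
lemma analysisOp_apply (f : H) (n : ℕ) : analysisOp φ hφ f n = ⟪φ n, f⟫ := rfl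

lemma adjoint_analysisOp_single (n : ℕ) (a : ℂ) :
    ((analysisOp φ hφ)†) (lp.single 2 n a) = a • φ n := by
  refine ext_inner_right ℂ fun f => ?_
  rw [adjoint_inner_left, lp.inner_single_left, analysisOp_apply, inner_smul_left,
    RCLike.inner_apply']

lemma hasSum_adjoint_analysisOp (c : ℓ²(ℕ, ℂ)) :
    HasSum (fun n => c n • φ n) (((analysisOp φ hφ)†) c) := by
  simpa only [adjoint_analysisOp_single] using
    ((analysisOp φ hφ)†).hasSum (lp.hasSum_single ENNReal.ofNat_ne_top c)

end Analysis

section CrossFrame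

variable [CompleteSpace H] {x y : ℕ → H} (hx : ∀ f, Memℓp (fun n => ⟪x n, f⟫) 2)
  (hy : ∀ f, Memℓp (fun n => ⟪y n, f⟫) 2)

noncomputable def crossFrameOp : H →L[ℂ] H := (analysisOp y hy)† ∘L analysisOp x hx

lemma hasSum_crossFrameOp (f : H) :
    HasSum (fun n => ⟪x n, f⟫ • y n) (crossFrameOp hx hy f) :=
  hasSum_adjoint_analysisOp y hy (analysisOp x hx f)

lemma adjoint_crossFrameOp : (crossFrameOp hx hy)† = crossFrameOp hy hx := by
  rw [crossFrameOp, adjoint_comp, adjoint_adjoint, crossFrameOp]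

end CrossFrame

lemma IsFrame.of_inner_eq {φ ψ : ℕ → H} (hφ : IsFrame φ) (L M : H →L[ℂ] H)
    (hML : ∀ f, M (L f) = f) (hψ : ∀ n f, ⟪ψ n, f⟫ = ⟪φ n, L f⟫) : IsFrame ψ := by
  obtain ⟨A, B, hA, hB, h⟩ := hφ
  have hlow (f : H) : ‖f‖ ^ 2 ≤ (‖M‖ ^ 2 + 1) * ‖L f‖ ^ 2 := by
    have : ‖f‖ ≤ ‖M‖ * ‖L f‖ := by simpa only [hML] using M.le_opNorm (L f)
    nlinarith [norm_nonneg f, sq_nonneg ‖L f‖]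
  have hup (f : H) : ‖L f‖ ^ 2 ≤ ‖L‖ ^ 2 * ‖f‖ ^ 2 := by
    rw [← mul_pow]
    exact pow_le_pow_left₀ (norm_nonneg _) (L.le_opNorm f) 2
  refine ⟨A / (‖M‖ ^ 2 + 1), B * (‖L‖ ^ 2 + 1), by positivity, by positivity, fun f => ?_⟩
  obtain ⟨hsum, hlb, hub⟩ := h (L f)
  simp only [hψ]
  refine ⟨hsum, ?_, ?_⟩
  · calc A / (‖M‖ ^ 2 + 1) * ‖f‖ ^ 2 ≤ A * ‖L f‖ ^ 2 := by
          rw [div_mul_eq_mul_div, div_le_iff₀ (by positivity)]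
          nlinarith [hlow f]
      _ ≤ _ := hlb
  · calc _ ≤ B * ‖L f‖ ^ 2 := hub
      _ ≤ B * (‖L‖ ^ 2 + 1) * ‖f‖ ^ 2 := by nlinarith [hup f, sq_nonneg ‖f‖]

lemma IsFrame.map_equiv [CompleteSpace H] {φ : ℕ → H} (hφ : IsFrame φ) (T : H ≃L[ℂ] H) :
    IsFrame fun n => T (φ n) := by
  refine hφ.of_inner_eq ((T : H →L[ℂ] H)†) ((T.symm : H →L[ℂ] H)†) (fun f => ?_)
    fun n f => (adjoint_inner_right (T : H →L[ℂ] H) (φ n) f).symm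
  rw [← comp_apply, ← adjoint_comp, T.coe_comp_coe_symm, adjoint_id, id_apply]

end

/-- For frames {x_n}, {y_n} in H: there is a bounded invertible T with
{T y_n} an alternate dual frame for {x_n} iff the operator S x = Σ_n ⟨x,x_n⟩ y_n is
invertible (bounded with bounded inverse). -/
theorem stmt3 {H : Type*} [NormedAddCommGroup H] [InnerProductSpace ℂ H] [CompleteSpace H]
    (x y : ℕ → H) (hx : IsFrame x) (hy : IsFrame y) :
    (∃ T : H ≃L[ℂ] H, IsFrame (fun n => T (y n)) ∧
      ∀ f : H, HasSum (fun n => (inner ℂ (T (y n)) f : ℂ) • x n) f) ↔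
    (∃ S : H ≃L[ℂ] H, ∀ f : H, HasSum (fun n => (inner ℂ (x n) f : ℂ) • y n) (S f)) := by
  have hx' := hx.memℓp_inner
  have hy' := hy.memℓp_inner
  have hdual (T : H →L[ℂ] H) (f : H) :
      HasSum (fun n => ⟪T (y n), f⟫ • x n) (((crossFrameOp hx' hy')† ∘L T†) f) := by
    simpa only [comp_apply, adjoint_inner_right, adjoint_crossFrameOp] using
      hasSum_crossFrameOp hy' hx' ((T†) f)
  constructor
  · rintro ⟨T, -, hT⟩
    have h₁ : (crossFrameOp hx' hy')† ∘L (T : H →L[ℂ] H)† = .id ℂ H :=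
      ext fun f => (hdual T f).unique (hT f)
    have h₂ : (T : H →L[ℂ] H) ∘L crossFrameOp hx' hy' = .id ℂ H := by
      simpa only [adjoint_comp, adjoint_adjoint, adjoint_id] using congrArg adjoint h₁
    refine ⟨T.symm, fun f => ?_⟩
    have h₃ : T.symm f = crossFrameOp hx' hy' f :=
      T.symm_apply_eq.2 (DFunLike.congr_fun h₂ f).symm
    exact h₃ ▸ hasSum_crossFrameOp hx' hy' f
  · rintro ⟨S, hS⟩
    have h₁ : crossFrameOp hx' hy' = S :=
      ext fun f => (hasSum_crossFrameOp hx' hy' f).unique (hS f)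
    refine ⟨S.symm, hy.map_equiv S.symm, fun f => ?_⟩
    have := hdual S.symm f
    rwa [← adjoint_comp, h₁, S.coe_symm_comp_coe, adjoint_id, id_apply] at this
end

section
/- Let X be a Banach space and X_d a Banach sequence space whose canonical unit vectors ε_n form a Schauder basis, and such that the dual basis ε_n* forms a Schauder basis of X_d*. If {y_n} ⊂ X* is an X_d-frame for X (i.e., A‖x‖ ≤ ‖{y_n(x)}‖_{X_d} ≤ B‖x‖ for all x ∈ X), then the analysis operator R̃ : X → X_d, R̃x = {y_n(x)}, is bounded and its adjoint R̃* : X_d* → X* satisfies R̃* b = Σ_n b_n y_n (the series converging in norm) for every b ∈ X_d*. -/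
/-! The adjoint of `R̃` is precomposition with `R̃`, a continuous linear map on the dual, so it
carries the dual-basis expansion `b = ∑ b(εₙ) εₙ*` to `∑ b(εₙ) (εₙ* ∘ R̃) = ∑ b(εₙ) yₙ`.
Boundedness of `R̃` is the upper frame bound once `R̃` is linear, and it is linear because its
composite with the injective coordinate map is `x ↦ (yₙ x)ₙ`. -/

open Function

def LinearMap.ofInjectiveComp {R M N P : Type*} [Semiring R] [AddCommMonoid M] [AddCommMonoid N]
    [AddCommMonoid P] [Module R M] [Module R N] [Module R P]
    (ι : N →ₗ[R] P) (hι : Injective ι) (f : M →ₗ[R] P) (g : M → N) (hg : ∀ x, ι (g x) = f x) :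
    M →ₗ[R] N where
  toFun := g
  map_add' x z := hι (by simp only [hg, map_add])
  map_smul' c x := hι (by simp only [hg, map_smul, RingHom.id_apply])

theorem HasSum.comp_continuousLinearMap {𝕜 X W G ι : Type*} [NontriviallyNormedField 𝕜]
    [NormedAddCommGroup X] [NormedSpace 𝕜 X] [NormedAddCommGroup W] [NormedSpace 𝕜 W]
    [NormedAddCommGroup G] [NormedSpace 𝕜 G]
    {f : ι → W →L[𝕜] G} {b : W →L[𝕜] G} (hb : HasSum f b) (T : X →L[𝕜] W) :
    HasSum (fun n => (f n).comp T) (b.comp T) :=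
  hb.mapL (ContinuousLinearMap.precomp G T)

theorem stmt4_general {X W : Type*} [NormedAddCommGroup X] [NormedSpace ℂ X]
    [NormedAddCommGroup W] [NormedSpace ℂ W]
    (ι : W →ₗ[ℂ] (ℕ → ℂ)) (hι : Function.Injective ι)
    (e : ℕ → W)
    (es : ℕ → (W →L[ℂ] ℂ)) (hes : ∀ n a, es n a = ι a n)
    (hdualbasis : ∀ b : W →L[ℂ] ℂ, HasSum (fun n => b (e n) • es n) b)
    (y : ℕ → (X →L[ℂ] ℂ))
    (R : X → W) (hR : ∀ (x : X) (n : ℕ), ι (R x) n = y n x)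
    (A B : ℝ)
    (hframe : ∀ x : X, A * ‖x‖ ≤ ‖R x‖ ∧ ‖R x‖ ≤ B * ‖x‖) :
    ∃ Rc : X →L[ℂ] W, (∀ x, Rc x = R x) ∧
      ∀ b : W →L[ℂ] ℂ, HasSum (fun n => b (e n) • y n) (b.comp Rc) := by
  let analysis : X →ₗ[ℂ] W :=
    .ofInjectiveComp ι hι (.pi fun n => (y n).toLinearMap) R fun x => funext (hR x)
  let Rc : X →L[ℂ] W := analysis.mkContinuous B fun x => (hframe x).2
  have hcoord : ∀ n, (es n).comp Rc = y n := fun n => by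
    ext x
    simp [Rc, analysis, LinearMap.ofInjectiveComp, hes, hR]
  refine ⟨Rc, fun _ => rfl, fun b => ?_⟩
  simpa only [ContinuousLinearMap.smul_comp, hcoord] using
    (hdualbasis b).comp_continuousLinearMap Rc

/-- If {y_n} ⊂ X* is an X_d-frame for X, then the analysis operator
R̃ : X → X_d, R̃x = {y_n(x)}, is bounded and its (Banach) adjoint satisfies
R̃* b = Σ_n b_n y_n (norm convergence) for every b ∈ X_d*.
The sequence space X_d is modelled as a Banach space W with an injective linear
"coordinate" map ι into sequences, whose canonical vectors e n form a Schauder basis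
and whose coordinate functionals es n form a Schauder basis of the dual. -/
theorem stmt4 {X W : Type*} [NormedAddCommGroup X] [NormedSpace ℂ X] [CompleteSpace X]
    [NormedAddCommGroup W] [NormedSpace ℂ W] [CompleteSpace W]
    (ι : W →ₗ[ℂ] (ℕ → ℂ)) (hι : Function.Injective ι)
    (e : ℕ → W) (he : ∀ n, ι (e n) = fun j => if n = j then (1 : ℂ) else 0)
    (hbasis : ∀ a : W, HasSum (fun n => ι a n • e n) a)
    (es : ℕ → (W →L[ℂ] ℂ)) (hes : ∀ n a, es n a = ι a n)
    (hdualbasis : ∀ b : W →L[ℂ] ℂ, HasSum (fun n => b (e n) • es n) b)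
    (y : ℕ → (X →L[ℂ] ℂ))
    (R : X → W) (hR : ∀ (x : X) (n : ℕ), ι (R x) n = y n x)
    (A B : ℝ) (hA : 0 < A) (hB : 0 < B)
    (hframe : ∀ x : X, A * ‖x‖ ≤ ‖R x‖ ∧ ‖R x‖ ≤ B * ‖x‖) :
    ∃ Rc : X →L[ℂ] W, (∀ x, Rc x = R x) ∧
      ∀ b : W →L[ℂ] ℂ, HasSum (fun n => b (e n) • y n) (b.comp Rc) :=
  stmt4_general ι hι e es hes hdualbasis y R hR A B hframe
end

section
/- Let X be a Banach space, X_d a Banach sequence space whose canonical unit vectors form a Schauder basis, and {x_n} ⊂ X a co-frame (i.e., for every y ∈ X*, the sequence {y(x_n)} lies in X_d* and Ã‖y‖ ≤ ‖{y(x_n)}‖_{X_d*} ≤ B̃‖y‖). Then the synthesis operator S₀ defined on finitely supported sequences by S₀a = Σ_n a_n x_n extends uniquely to a bounded linear operator S : X_d → X, and the adjoint S* : X* → X_d* is the analysis operator Ry = {y(x_n)}. -/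
/-! The upper frame bound, applied to the functionals `y ∈ X*` through the identity
`y (∑ₙ cₙ xₙ) = (R y) (∑ₙ cₙ eₙ)` and Hahn–Banach, gives `‖∑ₙ cₙ xₙ‖ ≤ B̃ ‖∑ₙ cₙ eₙ‖` on finite sums.
The basis expansion `a = ∑ₙ aₙ eₙ` of any `a ∈ X_d` is therefore carried to a convergent series
`S a = ∑ₙ aₙ xₙ` with `‖S a‖ ≤ B̃ ‖a‖`. Uniqueness of `S`, and `S* = R`, hold because a bounded
operator on `X_d` is determined by its values on the basis vectors. -/

section SequenceSpace

variable {𝕜 β W X : Type*} [NormedField 𝕜] [NormedAddCommGroup W] [NormedSpace 𝕜 W]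
  [NormedAddCommGroup X] [NormedSpace 𝕜 X]

theorem ContinuousLinearMap.ext_of_hasSum_basis {e : β → W}
    (hbasis : ∀ a : W, ∃ c : β → 𝕜, HasSum (fun n => c n • e n) a)
    {T T' : W →L[𝕜] X} (h : ∀ n, T (e n) = T' (e n)) : T = T' := by
  ext a
  obtain ⟨c, hc⟩ := hbasis a
  have hT := hc.mapL T
  have hT' := hc.mapL T'
  simp only [map_smul, h] at hT hT'
  exact hT.unique hT'

theorem Summable.of_norm_finset_sum_le [CompleteSpace X] {u : β → X} {v : β → W} {B : ℝ}
    (h : ∀ s : Finset β, ‖∑ n ∈ s, u n‖ ≤ B * ‖∑ n ∈ s, v n‖) (hv : Summable v) :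
    Summable u := by
  rw [summable_iff_vanishing_norm]
  intro ε hε
  have hB : 0 < |B| + 1 := by positivity
  obtain ⟨s, hs⟩ := hv.vanishing (Metric.ball_mem_nhds 0 (div_pos hε hB))
  refine ⟨s, fun t ht => ?_⟩
  calc ‖∑ n ∈ t, u n‖ ≤ B * ‖∑ n ∈ t, v n‖ := h t
    _ ≤ (|B| + 1) * ‖∑ n ∈ t, v n‖ := by gcongr; linarith [le_abs_self B]
    _ < (|B| + 1) * (ε / (|B| + 1)) := by gcongr; exact mem_ball_zero_iff.mp (hs t ht)
    _ = ε := mul_div_cancel₀ ε hB.ne'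

theorem HasSum.norm_le_mul_of_norm_finset_sum_le {u : β → X} {v : β → W} {a : X} {b : W}
    {B : ℝ} (h : ∀ s : Finset β, ‖∑ n ∈ s, u n‖ ≤ B * ‖∑ n ∈ s, v n‖)
    (hu : HasSum u a) (hv : HasSum v b) : ‖a‖ ≤ B * ‖b‖ :=
  le_of_tendsto_of_tendsto' hu.norm (hv.norm.const_mul B) h

noncomputable def synthesisₗ (coeff : W →ₗ[𝕜] (β → 𝕜)) (x : β → X)
    (hsum : ∀ a, Summable fun n => coeff a n • x n) : W →ₗ[𝕜] X where
  toFun a := ∑' n, coeff a n • x n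
  map_add' a b := by
    simp only [map_add, Pi.add_apply, add_smul]
    exact (hsum a).tsum_add (hsum b)
  map_smul' c a := by
    simp only [map_smul, Pi.smul_apply, smul_eq_mul, mul_smul, RingHom.id_apply]
    exact (hsum a).tsum_const_smul c

theorem synthesisₗ_apply_basis [DecidableEq β] {coeff : W →ₗ[𝕜] (β → 𝕜)} {x : β → X}
    (hsum : ∀ a, Summable fun n => coeff a n • x n) {e : β → W}
    (he : ∀ n, coeff (e n) = fun j => if n = j then (1 : 𝕜) else 0) (n : β) :
    synthesisₗ coeff x hsum (e n) = x n := by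
  change ∑' m, coeff (e n) m • x m = x n
  simp_rw [he, ite_smul, one_smul, zero_smul]
  exact tsum_ite_eq' n x

end SequenceSpace

theorem norm_le_mul_norm_of_dual_apply_eq {𝕜 W X : Type*} [RCLike 𝕜] [NormedAddCommGroup W]
    [NormedSpace 𝕜 W] [NormedAddCommGroup X] [NormedSpace 𝕜 X]
    (R : StrongDual 𝕜 X → StrongDual 𝕜 W) {B : ℝ} (hB : 0 ≤ B)
    (hR : ∀ y, ‖R y‖ ≤ B * ‖y‖) {v : X} {w : W} (h : ∀ y, y v = R y w) :
    ‖v‖ ≤ B * ‖w‖ := by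
  refine NormedSpace.norm_le_dual_bound 𝕜 v (by positivity) fun y => ?_
  calc ‖y v‖ = ‖R y w‖ := by rw [h]
    _ ≤ ‖R y‖ * ‖w‖ := (R y).le_opNorm w
    _ ≤ B * ‖y‖ * ‖w‖ := by gcongr; exact hR y
    _ = B * ‖w‖ * ‖y‖ := by ring

theorem stmt5_general {X W : Type*} [NormedAddCommGroup X] [NormedSpace ℂ X] [CompleteSpace X]
    [NormedAddCommGroup W] [NormedSpace ℂ W]
    (ι : W →ₗ[ℂ] (ℕ → ℂ))
    (e : ℕ → W) (he : ∀ n, ι (e n) = fun j => if n = j then (1 : ℂ) else 0)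
    (hbasis : ∀ a : W, HasSum (fun n => ι a n • e n) a)
    (x : ℕ → X)
    (Rc : (X →L[ℂ] ℂ) → (W →L[ℂ] ℂ))
    (hRc : ∀ (y : X →L[ℂ] ℂ) (n : ℕ), Rc y (e n) = y (x n))
    (At Bt : ℝ) (hBt : 0 < Bt)
    (hcoframe : ∀ y : X →L[ℂ] ℂ, At * ‖y‖ ≤ ‖Rc y‖ ∧ ‖Rc y‖ ≤ Bt * ‖y‖) :
    ∃ S : W →L[ℂ] X, (∀ n, S (e n) = x n) ∧
      (∀ S' : W →L[ℂ] X, (∀ n, S' (e n) = x n) → S' = S) ∧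
      (∀ y : X →L[ℂ] ℂ, y.comp S = Rc y) := by
  have hfinite (a : W) (s : Finset ℕ) :
      ‖∑ n ∈ s, ι a n • x n‖ ≤ Bt * ‖∑ n ∈ s, ι a n • e n‖ :=
    norm_le_mul_norm_of_dual_apply_eq Rc hBt.le (fun y => (hcoframe y).2) fun y => by
      simp only [map_sum, map_smul, hRc, smul_eq_mul]
  have hsum (a : W) : Summable fun n => ι a n • x n :=
    .of_norm_finset_sum_le (hfinite a) (hbasis a).summable
  let S := (synthesisₗ ι x hsum).mkContinuous Bt fun a =>
    (hsum a).hasSum.norm_le_mul_of_norm_finset_sum_le (hfinite a) (hbasis a)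
  have hSe : ∀ n, S (e n) = x n := synthesisₗ_apply_basis hsum he
  have hexpand (a : W) : ∃ c : ℕ → ℂ, HasSum (fun n => c n • e n) a := ⟨_, hbasis a⟩
  refine ⟨S, hSe, fun S' hS' => ?_, fun y => ?_⟩
  · exact ContinuousLinearMap.ext_of_hasSum_basis hexpand fun n => by rw [hS', hSe]
  · exact ContinuousLinearMap.ext_of_hasSum_basis hexpand fun n => by
      rw [ContinuousLinearMap.comp_apply, hSe, hRc]

/-- If {x_n} ⊂ X is a co-frame (with analysis operator
Ry = {y(x_n)} ∈ X_d* satisfying Ã‖y‖ ≤ ‖Ry‖ ≤ B̃‖y‖), then the synthesis operator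
defined on finitely supported sequences by S₀a = Σ a_n x_n extends uniquely to a
bounded operator S : X_d → X, and S* = R. The sequence space X_d is modelled as a
Banach space W whose canonical vectors e n form a Schauder basis; a functional
b ∈ X_d* is identified with the sequence (b (e n))_n. -/
theorem stmt5 {X W : Type*} [NormedAddCommGroup X] [NormedSpace ℂ X] [CompleteSpace X]
    [NormedAddCommGroup W] [NormedSpace ℂ W] [CompleteSpace W]
    (ι : W →ₗ[ℂ] (ℕ → ℂ)) (hι : Function.Injective ι)
    (e : ℕ → W) (he : ∀ n, ι (e n) = fun j => if n = j then (1 : ℂ) else 0)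
    (hbasis : ∀ a : W, HasSum (fun n => ι a n • e n) a)
    (x : ℕ → X)
    (Rc : (X →L[ℂ] ℂ) → (W →L[ℂ] ℂ))
    (hRc : ∀ (y : X →L[ℂ] ℂ) (n : ℕ), Rc y (e n) = y (x n))
    (At Bt : ℝ) (hAt : 0 < At) (hBt : 0 < Bt)
    (hcoframe : ∀ y : X →L[ℂ] ℂ, At * ‖y‖ ≤ ‖Rc y‖ ∧ ‖Rc y‖ ≤ Bt * ‖y‖) :
    ∃ S : W →L[ℂ] X, (∀ n, S (e n) = x n) ∧
      (∀ S' : W →L[ℂ] X, (∀ n, S' (e n) = x n) → S' = S) ∧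
      (∀ y : X →L[ℂ] ℂ, y.comp S = Rc y) :=
  stmt5_general ι e he hbasis x Rc hRc At Bt hBt hcoframe
end

section
/- Let X be a Banach space, X_d a Banach sequence space whose canonical vectors ε_n form a basis and whose dual basis ε_n* forms a basis of X_d*. Suppose {x_n} ⊂ X, {y_n} ⊂ X* satisfy: {y(x_n)} ∈ X_d* for all y ∈ X*, {y_n(x)} ∈ X_d for all x ∈ X, and x = Σ_n y_n(x) x_n for all x ∈ X. Then {x_n} is a co-frame and {y_n} is a frame; i.e., there exist positive constants giving the two-sided norm inequalities (1) and (2), so ({x_n},{y_n}) is a cross-frame. -/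
/-!
Both analysis maps are bounded by the closed graph theorem: their coordinates
`v ↦ y n v` and `g ↦ g (x n)` are continuous, and the coordinate functionals on `X_d` and
on `X_d*` separate points. Pairing the reconstruction formula for `v` with the
dual-basis expansion of `Rc g` gives `g v = Rc g (R v)`, so `‖g‖ ≤ ‖R‖ ‖Rc g‖` and, by
Hahn–Banach, `‖v‖ ≤ ‖Rc‖ ‖R v‖`.
-/

open Filter Topology

theorem injective_coeffs_of_hasSum {ι 𝕜 V : Type*} [Semiring 𝕜] [AddCommMonoid V]
    [Module 𝕜 V] [TopologicalSpace V] [T2Space V] (c : ι → V → 𝕜) (u : ι → V)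
    (h : ∀ b, HasSum (fun n => c n b • u n) b) : Function.Injective fun b n => c n b := by
  intro a b hab
  have hcoeff : (fun n => c n a • u n) = fun n => c n b • u n := by
    funext n
    rw [show c n a = c n b from congrFun hab n]
  exact (h a).unique (hcoeff ▸ h b)

theorem exists_continuousLinearMap_of_separating_comp {𝕜 E F ι : Type*}
    [NontriviallyNormedField 𝕜] [NormedAddCommGroup E] [NormedSpace 𝕜 E] [CompleteSpace E]
    [NormedAddCommGroup F] [NormedSpace 𝕜 F] [CompleteSpace F]
    (φ : ι → StrongDual 𝕜 F) (hφ : Function.Injective fun a n => φ n a)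
    (R : E → F) (ψ : ι → StrongDual 𝕜 E) (hR : ∀ v n, φ n (R v) = ψ n v) :
    ∃ T : E →L[𝕜] F, ⇑T = R := by
  let L : E →ₗ[𝕜] F :=
    { toFun := R
      map_add' := fun v w => hφ <| funext fun n => by simp only [map_add, hR]
      map_smul' := fun c v => hφ <| funext fun n => by
        simp only [map_smul, hR, RingHom.id_apply] }
  refine ⟨⟨L, L.continuous_of_seq_closed_graph fun u v w hu hRu => hφ <| funext fun n => ?_⟩,
    rfl⟩
  have hψ : Tendsto (fun k => ψ n (u k)) atTop (𝓝 (φ n w)) :=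
    (((φ n).continuous.tendsto w).comp hRu).congr fun k => hR (u k) n
  exact tendsto_nhds_unique hψ (((ψ n).continuous.tendsto v).comp hu) |>.trans (hR v n).symm

section Duality

variable {𝕜 X W : Type*} [RCLike 𝕜] [NormedAddCommGroup X] [NormedSpace 𝕜 X]
  [NormedAddCommGroup W] [NormedSpace 𝕜 W]

theorem apply_eq_apply_apply_of_hasSum (e : ℕ → W) (es : ℕ → StrongDual 𝕜 W)
    (hdual : ∀ b : StrongDual 𝕜 W, HasSum (fun n => b (e n) • es n) b)
    (x : ℕ → X) (y : ℕ → StrongDual 𝕜 X)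
    (hrecon : ∀ v, HasSum (fun n => y n v • x n) v)
    (R : X → W) (hR : ∀ v n, es n (R v) = y n v)
    (Rc : StrongDual 𝕜 X → StrongDual 𝕜 W) (hRc : ∀ g n, Rc g (e n) = g (x n))
    (g : StrongDual 𝕜 X) (v : X) : g v = Rc g (R v) := by
  have hterm : (fun n => g (y n v • x n)) = fun n => (Rc g (e n) • es n) (R v) := by
    funext n
    simp only [map_smul, smul_apply, smul_eq_mul, hRc, hR, mul_comm]
  exact ((hrecon v).mapL g).unique
    (hterm ▸ (hdual (Rc g)).mapL (ContinuousLinearMap.apply 𝕜 𝕜 (R v)))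

variable {T : X →L[𝕜] W} {S : StrongDual 𝕜 X →L[𝕜] StrongDual 𝕜 W}

theorem norm_le_opNorm_mul_norm_of_apply_eq (h : ∀ g v, g v = S g (T v)) (v : X) :
    ‖v‖ ≤ ‖S‖ * ‖T v‖ :=
  NormedSpace.norm_le_dual_bound 𝕜 v (by positivity) fun g => calc
    ‖g v‖ = ‖S g (T v)‖ := by rw [h]
    _ ≤ ‖S g‖ * ‖T v‖ := (S g).le_opNorm _
    _ ≤ ‖S‖ * ‖g‖ * ‖T v‖ := by gcongr; exact S.le_opNorm g
    _ = ‖S‖ * ‖T v‖ * ‖g‖ := by ring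

theorem norm_dual_le_opNorm_mul_norm_of_apply_eq (h : ∀ g v, g v = S g (T v))
    (g : StrongDual 𝕜 X) : ‖g‖ ≤ ‖T‖ * ‖S g‖ :=
  ContinuousLinearMap.opNorm_le_bound _ (by positivity) fun v => calc
    ‖g v‖ = ‖S g (T v)‖ := by rw [h]
    _ ≤ ‖S g‖ * ‖T v‖ := (S g).le_opNorm _
    _ ≤ ‖S g‖ * (‖T‖ * ‖v‖) := by gcongr; exact T.le_opNorm v
    _ = ‖T‖ * ‖S g‖ * ‖v‖ := by ring

end Duality

theorem ContinuousLinearMap.exists_two_sided_bound {𝕜 E F : Type*}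
    [NontriviallyNormedField 𝕜] [NormedAddCommGroup E] [NormedSpace 𝕜 E]
    [NormedAddCommGroup F] [NormedSpace 𝕜 F]
    (T : E →L[𝕜] F) {K : ℝ} (hK : ∀ v, ‖v‖ ≤ K * ‖T v‖) :
    ∃ A B : ℝ, 0 < A ∧ 0 < B ∧ ∀ v, A * ‖v‖ ≤ ‖T v‖ ∧ ‖T v‖ ≤ B * ‖v‖ := by
  refine ⟨(max K 1)⁻¹, ‖T‖ + 1, by positivity, by positivity, fun v => ⟨?_, ?_⟩⟩
  · rw [inv_mul_le_iff₀ (by positivity)]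
    exact (hK v).trans (by gcongr; exact le_max_left K 1)
  · exact (T.le_opNorm v).trans (by gcongr; linarith)

theorem stmt7_general {X W : Type*} [NormedAddCommGroup X] [NormedSpace ℂ X] [CompleteSpace X]
    [NormedAddCommGroup W] [NormedSpace ℂ W] [CompleteSpace W]
    (ι : W →ₗ[ℂ] (ℕ → ℂ)) (hι : Function.Injective ι)
    (e : ℕ → W)
    (es : ℕ → (W →L[ℂ] ℂ)) (hes : ∀ n a, es n a = ι a n)
    (hdualbasis : ∀ b : W →L[ℂ] ℂ, HasSum (fun n => b (e n) • es n) b)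
    (x : ℕ → X) (y : ℕ → (X →L[ℂ] ℂ))
    -- {y_n(x)} ∈ X_d for every x ∈ X:
    (R : X → W) (hR : ∀ (v : X) (n : ℕ), ι (R v) n = y n v)
    -- {y(x_n)} ∈ X_d* for every y ∈ X*:
    (Rc : (X →L[ℂ] ℂ) → (W →L[ℂ] ℂ))
    (hRc : ∀ (g : X →L[ℂ] ℂ) (n : ℕ), Rc g (e n) = g (x n))
    -- reconstruction formula:
    (hrecon : ∀ v : X, HasSum (fun n => y n v • x n) v) :
    (∃ A B : ℝ, 0 < A ∧ 0 < B ∧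
      ∀ v : X, A * ‖v‖ ≤ ‖R v‖ ∧ ‖R v‖ ≤ B * ‖v‖) ∧
    (∃ At Bt : ℝ, 0 < At ∧ 0 < Bt ∧
      ∀ g : X →L[ℂ] ℂ, At * ‖g‖ ≤ ‖Rc g‖ ∧ ‖Rc g‖ ≤ Bt * ‖g‖) := by
  have hR' : ∀ v n, es n (R v) = y n v := fun v n => by rw [hes, hR]
  have hes_inj : Function.Injective fun a n => es n a := by
    convert hι using 1
    exact funext fun a => funext fun n => hes n a
  obtain ⟨T, rfl⟩ := exists_continuousLinearMap_of_separating_comp es hes_inj R y hR'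
  have heval_inj : Function.Injective fun (b : W →L[ℂ] ℂ) n => b (e n) :=
    injective_coeffs_of_hasSum (V := W →L[ℂ] ℂ) (fun n b => b (e n)) es hdualbasis
  obtain ⟨S, rfl⟩ := exists_continuousLinearMap_of_separating_comp
    (fun n => ContinuousLinearMap.apply ℂ ℂ (e n)) heval_inj Rc
    (fun n => ContinuousLinearMap.apply ℂ ℂ (x n)) hRc
  have hpair := apply_eq_apply_apply_of_hasSum e es hdualbasis x y hrecon T hR' S hRc
  exact ⟨T.exists_two_sided_bound (norm_le_opNorm_mul_norm_of_apply_eq hpair),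
    S.exists_two_sided_bound (norm_dual_le_opNorm_mul_norm_of_apply_eq hpair)⟩

/-- Theorem 5 of the paper: If {x_n} ⊂ X, {y_n} ⊂ X* satisfy
{y(x_n)} ∈ X_d* for all y ∈ X*, {y_n(x)} ∈ X_d for all x ∈ X, and
x = Σ_n y_n(x) x_n for all x, then {x_n} is a co-frame and {y_n} is a frame,
i.e. ({x_n},{y_n}) is a cross-frame. Membership of the coefficient sequences is
expressed by the (set-theoretic) analysis maps R and Rc into W ≅ X_d and
W* ≅ X_d*. -/
theorem stmt7 {X W : Type*} [NormedAddCommGroup X] [NormedSpace ℂ X] [CompleteSpace X]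
    [NormedAddCommGroup W] [NormedSpace ℂ W] [CompleteSpace W]
    (ι : W →ₗ[ℂ] (ℕ → ℂ)) (hι : Function.Injective ι)
    (e : ℕ → W) (he : ∀ n, ι (e n) = fun j => if n = j then (1 : ℂ) else 0)
    (hbasis : ∀ a : W, HasSum (fun n => ι a n • e n) a)
    (es : ℕ → (W →L[ℂ] ℂ)) (hes : ∀ n a, es n a = ι a n)
    (hdualbasis : ∀ b : W →L[ℂ] ℂ, HasSum (fun n => b (e n) • es n) b)
    (x : ℕ → X) (y : ℕ → (X →L[ℂ] ℂ))
    -- {y_n(x)} ∈ X_d for every x ∈ X: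
    (R : X → W) (hR : ∀ (v : X) (n : ℕ), ι (R v) n = y n v)
    -- {y(x_n)} ∈ X_d* for every y ∈ X*:
    (Rc : (X →L[ℂ] ℂ) → (W →L[ℂ] ℂ))
    (hRc : ∀ (g : X →L[ℂ] ℂ) (n : ℕ), Rc g (e n) = g (x n))
    -- reconstruction formula:
    (hrecon : ∀ v : X, HasSum (fun n => y n v • x n) v) :
    (∃ A B : ℝ, 0 < A ∧ 0 < B ∧
      ∀ v : X, A * ‖v‖ ≤ ‖R v‖ ∧ ‖R v‖ ≤ B * ‖v‖) ∧
    (∃ At Bt : ℝ, 0 < At ∧ 0 < Bt ∧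
      ∀ g : X →L[ℂ] ℂ, At * ‖g‖ ≤ ‖Rc g‖ ∧ ‖Rc g‖ ≤ Bt * ‖g‖) :=
  stmt7_general ι hι e es hes hdualbasis x y R hR Rc hRc hrecon
end

section
/- Let X be a Banach space, {x_n} ⊂ X a co-frame and {y_n} ⊂ X* a frame (with respect to a sequence space X_d as in the standing assumptions). Then there exists a bounded invertible operator T : X → X such that {T x_n} is an alternate dual frame for {y_n} if and only if the operator U : X → X defined by Ux = Σ_n y_n(x) x_n is bounded and invertible. -/
/-! Both directions come from the relation `U = T⁻¹`. Applying `T⁻¹` to the reconstruction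
formula `v = Σ y_n(v) T x_n` gives `T⁻¹ v = Σ y_n(v) x_n`; conversely applying `U⁻¹` to
`U v = Σ y_n(v) x_n` gives the reconstruction formula for `{U⁻¹ x_n}`. That `{U⁻¹ x_n}` is again a
co-frame holds because composing functionals with an isomorphism distorts their norms by at most
`‖U‖` and `‖U⁻¹‖`. -/

section

open ContinuousLinearMap

variable {𝕜 : Type*} [NontriviallyNormedField 𝕜]
  {X X' F W : Type*} [NormedAddCommGroup X] [NormedSpace 𝕜 X] [NormedAddCommGroup X']
  [NormedSpace 𝕜 X'] [NormedAddCommGroup F] [NormedSpace 𝕜 F]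
  [NormedAddCommGroup W] [NormedSpace 𝕜 W]

theorem HasSum.smul_map {ι : Type*} {c : ι → 𝕜} {x : ι → X} {v : X} (T : X →L[𝕜] X')
    (h : HasSum (fun n => c n • x n) v) : HasSum (fun n => c n • T (x n)) (T v) := by
  simpa only [map_smul] using T.hasSum h

theorem ContinuousLinearEquiv.norm_le_norm_comp_mul_norm_symm (T : X ≃L[𝕜] X') (g : X' →L[𝕜] F) :
    ‖g‖ ≤ ‖g.comp (T : X →L[𝕜] X')‖ * ‖(T.symm : X' →L[𝕜] X)‖ := by
  have hg : g = (g.comp (T : X →L[𝕜] X')).comp (T.symm : X' →L[𝕜] X) := by ext; simp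
  conv_lhs => rw [hg]
  exact opNorm_comp_le _ _

variable (𝕜) in
/-- `Rc g` is the sequence `{g (x n)}` realised as a functional on the sequence space `W`. -/
def IsCoFrame {ι : Type*} (e : ι → W) (x : ι → X) : Prop :=
  ∃ Rc : (X →L[𝕜] 𝕜) → (W →L[𝕜] 𝕜), (∀ (g : X →L[𝕜] 𝕜) (n : ι), Rc g (e n) = g (x n)) ∧
    ∃ A B : ℝ, 0 < A ∧ 0 < B ∧ ∀ g : X →L[𝕜] 𝕜, A * ‖g‖ ≤ ‖Rc g‖ ∧ ‖Rc g‖ ≤ B * ‖g‖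

/-- The `+ 1` keeps the new bounds positive when `X` is trivial and `‖T‖ = ‖T⁻¹‖ = 0`. -/
theorem IsCoFrame.map_equiv {ι : Type*} {e : ι → W} {x : ι → X} (hx : IsCoFrame 𝕜 e x)
    (T : X ≃L[𝕜] X') : IsCoFrame 𝕜 e (fun n => T (x n)) := by
  obtain ⟨Rc, hRc, A, B, hA, hB, hbounds⟩ := hx
  set S : X →L[𝕜] X' := (T : X →L[𝕜] X')
  set S' : X' →L[𝕜] X := (T.symm : X' →L[𝕜] X)
  refine ⟨fun g => Rc (g.comp S), fun g n => hRc _ n, A / (‖S'‖ + 1), B * (‖S‖ + 1),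
    by positivity, by positivity, fun g => ⟨?_, ?_⟩⟩
  · rw [div_mul_eq_mul_div, div_le_iff₀ (by positivity)]
    calc A * ‖g‖ ≤ A * (‖g.comp S‖ * (‖S'‖ + 1)) := by
          gcongr
          calc ‖g‖ ≤ ‖g.comp S‖ * ‖S'‖ := T.norm_le_norm_comp_mul_norm_symm g
            _ ≤ ‖g.comp S‖ * (‖S'‖ + 1) := by gcongr; linarith
      _ = A * ‖g.comp S‖ * (‖S'‖ + 1) := by ring
      _ ≤ ‖Rc (g.comp S)‖ * (‖S'‖ + 1) := by gcongr; exact (hbounds _).1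
  · calc ‖Rc (g.comp S)‖ ≤ B * ‖g.comp S‖ := (hbounds _).2
      _ ≤ B * (‖g‖ * ‖S‖) := by gcongr; exact opNorm_comp_le _ _
      _ ≤ B * (‖S‖ + 1) * ‖g‖ := by nlinarith [norm_nonneg g]

end

theorem stmt9_general {X W : Type*} [NormedAddCommGroup X] [NormedSpace ℂ X]
    [NormedAddCommGroup W] [NormedSpace ℂ W]
    (e : ℕ → W)
    (x : ℕ → X) (y : ℕ → (X →L[ℂ] ℂ))
    -- {x_n} is a co-frame:
    (Rc : (X →L[ℂ] ℂ) → (W →L[ℂ] ℂ))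
    (hRc : ∀ (g : X →L[ℂ] ℂ) (n : ℕ), Rc g (e n) = g (x n))
    (At Bt : ℝ) (hAt : 0 < At) (hBt : 0 < Bt)
    (hcoframe : ∀ g : X →L[ℂ] ℂ, At * ‖g‖ ≤ ‖Rc g‖ ∧ ‖Rc g‖ ≤ Bt * ‖g‖) :
    (∃ T : X ≃L[ℂ] X,
      -- {T x_n} is a co-frame:
      (∃ Rc' : (X →L[ℂ] ℂ) → (W →L[ℂ] ℂ),
        (∀ (g : X →L[ℂ] ℂ) (n : ℕ), Rc' g (e n) = g (T (x n))) ∧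
        ∃ At' Bt' : ℝ, 0 < At' ∧ 0 < Bt' ∧
          ∀ g : X →L[ℂ] ℂ, At' * ‖g‖ ≤ ‖Rc' g‖ ∧ ‖Rc' g‖ ≤ Bt' * ‖g‖) ∧
      -- and it is alternate dual for {y_n}:
      (∀ v : X, HasSum (fun n => y n v • T (x n)) v)) ↔
    (∃ U : X ≃L[ℂ] X, ∀ v : X, HasSum (fun n => y n v • x n) (U v)) := by
  constructor
  · rintro ⟨T, -, hdual⟩
    exact ⟨T.symm, fun v => by simpa using (hdual v).smul_map (T.symm : X →L[ℂ] X)⟩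
  · rintro ⟨U, hU⟩
    have hx : IsCoFrame ℂ e x := ⟨Rc, hRc, At, Bt, hAt, hBt, hcoframe⟩
    exact ⟨U.symm, hx.map_equiv U.symm,
      fun v => by simpa using (hU v).smul_map (U.symm : X →L[ℂ] X)⟩

/-- Theorem 6 of the paper: Let {x_n} ⊂ X be a co-frame and
{y_n} ⊂ X* a frame. There exists a bounded invertible T : X → X with {T x_n} an
alternate dual frame for {y_n} (i.e. {T x_n} is a co-frame and x = Σ y_n(x) T x_n)
iff the operator U x = Σ_n y_n(x) x_n is bounded and invertible. -/
theorem stmt9 {X W : Type*} [NormedAddCommGroup X] [NormedSpace ℂ X] [CompleteSpace X]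
    [NormedAddCommGroup W] [NormedSpace ℂ W] [CompleteSpace W]
    (ι : W →ₗ[ℂ] (ℕ → ℂ)) (hι : Function.Injective ι)
    (e : ℕ → W) (he : ∀ n, ι (e n) = fun j => if n = j then (1 : ℂ) else 0)
    (hbasis : ∀ a : W, HasSum (fun n => ι a n • e n) a)
    (x : ℕ → X) (y : ℕ → (X →L[ℂ] ℂ))
    -- {y_n} is a frame:
    (R : X → W) (hR : ∀ (v : X) (n : ℕ), ι (R v) n = y n v)
    (A B : ℝ) (hA : 0 < A) (hB : 0 < B)
    (hframe : ∀ v : X, A * ‖v‖ ≤ ‖R v‖ ∧ ‖R v‖ ≤ B * ‖v‖)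
    -- {x_n} is a co-frame:
    (Rc : (X →L[ℂ] ℂ) → (W →L[ℂ] ℂ))
    (hRc : ∀ (g : X →L[ℂ] ℂ) (n : ℕ), Rc g (e n) = g (x n))
    (At Bt : ℝ) (hAt : 0 < At) (hBt : 0 < Bt)
    (hcoframe : ∀ g : X →L[ℂ] ℂ, At * ‖g‖ ≤ ‖Rc g‖ ∧ ‖Rc g‖ ≤ Bt * ‖g‖) :
    (∃ T : X ≃L[ℂ] X,
      -- {T x_n} is a co-frame:
      (∃ Rc' : (X →L[ℂ] ℂ) → (W →L[ℂ] ℂ),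
        (∀ (g : X →L[ℂ] ℂ) (n : ℕ), Rc' g (e n) = g (T (x n))) ∧
        ∃ At' Bt' : ℝ, 0 < At' ∧ 0 < Bt' ∧
          ∀ g : X →L[ℂ] ℂ, At' * ‖g‖ ≤ ‖Rc' g‖ ∧ ‖Rc' g‖ ≤ Bt' * ‖g‖) ∧
      -- and it is alternate dual for {y_n}:
      (∀ v : X, HasSum (fun n => y n v • T (x n)) v)) ↔
    (∃ U : X ≃L[ℂ] X, ∀ v : X, HasSum (fun n => y n v • x n) (U v)) :=
  stmt9_general e x y Rc hRc At Bt hAt hBt hcoframe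
end

section
/- Let X be a Banach space, {x_n} ⊂ X a co-frame and {y_n} ⊂ X* a frame. Then there exists a bounded invertible operator T : X* → X* such that {T y_n} is an alternate dual frame for {x_n} if and only if the operator V : X* → X* defined by Vy = Σ_n y(x_n) y_n is bounded and invertible. -/
/-!
If `∑ g(xₙ) • T yₙ = g`, applying `T⁻¹` shows `V = T⁻¹`. Conversely, the upper co-frame bound
controls the partial sums of `∑ yₙ(v) • xₙ` in `X`, through the dual norm, by those of the basis
expansion of `{yₙ(v)}` in `X_d`; so the series converges and defines `U : X → X` with `V g = g ∘ U`,
i.e. `V = U*`. As `V` is invertible, `U` is bounded below and has dense range (Hahn–Banach), hence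
is invertible, and `T = V⁻¹ = (U⁻¹)*` works: `T yₙ = yₙ ∘ U⁻¹` is again a frame, and
`∑ g(xₙ) • T yₙ = T (V g) = g`.
-/

section

variable {𝕜 E F : Type*} [RCLike 𝕜] [NormedAddCommGroup E] [NormedSpace 𝕜 E]
  [NormedAddCommGroup F] [NormedSpace 𝕜 F]

theorem norm_sum_smul_le_of_dual_bound {W : Type*} [NormedAddCommGroup W] [NormedSpace 𝕜 W]
    {x : ℕ → E} {e : ℕ → W}
    {Φ : StrongDual 𝕜 E → StrongDual 𝕜 W} (hΦ : ∀ g n, Φ g (e n) = g (x n))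
    {C : ℝ} (hC₀ : 0 ≤ C) (hC : ∀ g, ‖Φ g‖ ≤ C * ‖g‖) (c : ℕ → 𝕜) (s : Finset ℕ) :
    ‖∑ n ∈ s, c n • x n‖ ≤ C * ‖∑ n ∈ s, c n • e n‖ := by
  refine NormedSpace.norm_le_dual_bound 𝕜 _ (by positivity) fun g => ?_
  have hg : g (∑ n ∈ s, c n • x n) = Φ g (∑ n ∈ s, c n • e n) := by
    simp only [map_sum, map_smul, hΦ]
  calc ‖g (∑ n ∈ s, c n • x n)‖ = ‖Φ g (∑ n ∈ s, c n • e n)‖ := by rw [hg]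
    _ ≤ ‖Φ g‖ * ‖∑ n ∈ s, c n • e n‖ := (Φ g).le_opNorm _
    _ ≤ C * ‖g‖ * ‖∑ n ∈ s, c n • e n‖ := by gcongr; exact hC g
    _ = C * ‖∑ n ∈ s, c n • e n‖ * ‖g‖ := by ring

theorem summable_smul_of_dual_bound {W : Type*} [NormedAddCommGroup W] [NormedSpace 𝕜 W]
    [CompleteSpace E] {x : ℕ → E} {e : ℕ → W}
    {Φ : StrongDual 𝕜 E → StrongDual 𝕜 W} (hΦ : ∀ g n, Φ g (e n) = g (x n))
    {C : ℝ} (hC₀ : 0 ≤ C) (hC : ∀ g, ‖Φ g‖ ≤ C * ‖g‖) {c : ℕ → 𝕜}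
    (hc : Summable fun n => c n • e n) : Summable fun n => c n • x n := by
  rw [summable_iff_vanishing_norm]
  intro ε hε
  obtain ⟨s, hs⟩ := cauchySeq_finset_iff_vanishing_norm.mp hc.hasSum.cauchySeq (ε / (C + 1))
    (by positivity)
  refine ⟨s, fun t hts => ?_⟩
  calc ‖∑ n ∈ t, c n • x n‖ ≤ C * ‖∑ n ∈ t, c n • e n‖ :=
        norm_sum_smul_le_of_dual_bound hΦ hC₀ hC c t
    _ ≤ C * (ε / (C + 1)) := by gcongr; exact (hs t hts).le
    _ < ε := by rw [mul_div_assoc', div_lt_iff₀ (by positivity)]; nlinarith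

theorem exists_continuousLinearMap_of_dual_apply_eq (V : StrongDual 𝕜 F →L[𝕜] StrongDual 𝕜 E)
    (u : E → F) (hu : ∀ g v, g (u v) = V g v) : ∃ U : E →L[𝕜] F, ∀ g v, g (U v) = V g v := by
  let Ul : E →ₗ[𝕜] F :=
    { toFun := u
      map_add' := fun a b => (SeparatingDual.eq_iff_forall_dual_eq (R := 𝕜)).mpr fun g => by
        simp only [map_add, hu]
      map_smul' := fun c a => (SeparatingDual.eq_iff_forall_dual_eq (R := 𝕜)).mpr fun g => by
        simp only [map_smul, hu, RingHom.id_apply] }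
  refine ⟨Ul.mkContinuous ‖V‖ fun v => ?_, hu⟩
  refine NormedSpace.norm_le_dual_bound 𝕜 _ (by positivity) fun g => ?_
  calc ‖g (u v)‖ = ‖V g v‖ := by rw [hu]
    _ ≤ ‖V g‖ * ‖v‖ := (V g).le_opNorm v
    _ ≤ ‖V‖ * ‖g‖ * ‖v‖ := by gcongr; exact V.le_opNorm g
    _ = ‖V‖ * ‖v‖ * ‖g‖ := by ring

theorem Submodule.topologicalClosure_eq_top_of_forall_dual_eq_zero (p : Submodule 𝕜 E)
    (h : ∀ f : StrongDual 𝕜 E, (∀ v ∈ p, f v = 0) → f = 0) : p.topologicalClosure = ⊤ := by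
  set q := p.topologicalClosure
  have : IsClosed (q : Set E) := p.isClosed_topologicalClosure
  by_contra hq
  obtain ⟨v, -, hv⟩ := SetLike.exists_of_lt (lt_top_iff_ne_top.mpr hq)
  obtain ⟨f, hf⟩ := SeparatingDual.exists_ne_zero (R := 𝕜)
    (show q.mkQ v ≠ 0 by simpa [Submodule.Quotient.mk_eq_zero] using hv)
  have hfq : f.comp q.mkQL = 0 := h _ fun w hw => by
    simp [(Submodule.Quotient.mk_eq_zero q).mpr (p.le_topologicalClosure hw)]
  exact hf (by simpa using congr($hfq v))

theorem exists_continuousLinearEquiv_of_dual_equiv [CompleteSpace E] [CompleteSpace F]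
    (U : E →L[𝕜] F) (V : StrongDual 𝕜 F ≃L[𝕜] StrongDual 𝕜 E) (hUV : ∀ g v, g (U v) = V g v) :
    ∃ S : E ≃L[𝕜] F, ⇑S = U := by
  have hlower : ∀ v, ‖v‖ ≤ ‖(V.symm : StrongDual 𝕜 E →L[𝕜] StrongDual 𝕜 F)‖ * ‖U v‖ := by
    intro v
    refine NormedSpace.norm_le_dual_bound 𝕜 _ (by positivity) fun h => ?_
    calc ‖h v‖ = ‖V.symm h (U v)‖ := by rw [hUV, V.apply_symm_apply]
      _ ≤ ‖V.symm h‖ * ‖U v‖ := (V.symm h).le_opNorm _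
      _ ≤ ‖(V.symm : StrongDual 𝕜 E →L[𝕜] StrongDual 𝕜 F)‖ * ‖h‖ * ‖U v‖ := by
          gcongr; exact (V.symm : StrongDual 𝕜 E →L[𝕜] StrongDual 𝕜 F).le_opNorm h
      _ = _ := by ring
  have hdense : U.range.topologicalClosure = ⊤ := by
    refine U.range.topologicalClosure_eq_top_of_forall_dual_eq_zero fun f hf => V.injective ?_
    ext v
    rw [← hUV, map_zero]
    exact hf (U v) ⟨v, rfl⟩
  have hbij := U.bijective_iff_dense_range_and_antilipschitz.mpr ⟨hdense, _,
    U.antilipschitz_of_bound (K := ‖(V.symm : StrongDual 𝕜 E →L[𝕜] StrongDual 𝕜 F)‖₊) hlower⟩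
  exact ⟨.ofBijective U (LinearMap.ker_eq_bot.mpr hbij.1) (LinearMap.range_eq_top.mpr hbij.2),
    rfl⟩

theorem dual_equiv_symm_apply (S : E ≃L[𝕜] F)
    (V : StrongDual 𝕜 F ≃L[𝕜] StrongDual 𝕜 E) (hSV : ∀ g v, g (S v) = V g v)
    (h : StrongDual 𝕜 E) (v : F) : V.symm h v = h (S.symm v) := by
  rw [show V.symm h = h.comp (S.symm : F →L[𝕜] E) from V.symm_apply_eq.mpr <| by
    ext w; simp [← hSV]]
  rfl

theorem exists_bounds_comp_continuousLinearEquiv {W : Type*} [Norm W] {R : F → W} {A B : ℝ}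
    (hA : 0 < A) (hB : 0 < B) (hR : ∀ v, A * ‖v‖ ≤ ‖R v‖ ∧ ‖R v‖ ≤ B * ‖v‖) (S : E ≃L[𝕜] F) :
    ∃ A' B' : ℝ, 0 < A' ∧ 0 < B' ∧ ∀ v, A' * ‖v‖ ≤ ‖R (S v)‖ ∧ ‖R (S v)‖ ≤ B' * ‖v‖ := by
  -- the `+ 1` keeps the constants positive when the operator norms vanish (trivial spaces)
  set a := ‖(S.symm : F →L[𝕜] E)‖ + 1
  set b := ‖(S : E →L[𝕜] F)‖ + 1
  have ha : 0 < a := by positivity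
  refine ⟨A / a, B * b, by positivity, by positivity, fun v => ⟨?_, ?_⟩⟩
  · have hv : ‖v‖ ≤ a * ‖S v‖ := calc
      ‖v‖ = ‖S.symm (S v)‖ := by rw [S.symm_apply_apply]
      _ ≤ ‖(S.symm : F →L[𝕜] E)‖ * ‖S v‖ := (S.symm : F →L[𝕜] E).le_opNorm _
      _ ≤ a * ‖S v‖ := by gcongr; linarith
    calc A / a * ‖v‖ ≤ A / a * (a * ‖S v‖) := by gcongr
      _ = A * ‖S v‖ := by field_simp
      _ ≤ ‖R (S v)‖ := (hR (S v)).1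
  · calc ‖R (S v)‖ ≤ B * ‖S v‖ := (hR (S v)).2
      _ ≤ B * (‖(S : E →L[𝕜] F)‖ * ‖v‖) := by gcongr; exact (S : E →L[𝕜] F).le_opNorm v
      _ ≤ B * b * ‖v‖ := by rw [← mul_assoc]; gcongr; linarith

end

theorem stmt10_general {X W : Type*} [NormedAddCommGroup X] [NormedSpace ℂ X] [CompleteSpace X]
    [NormedAddCommGroup W] [NormedSpace ℂ W] [CompleteSpace W]
    (ι : W →ₗ[ℂ] (ℕ → ℂ))
    (e : ℕ → W)
    (hbasis : ∀ a : W, HasSum (fun n => ι a n • e n) a)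
    (x : ℕ → X) (y : ℕ → (X →L[ℂ] ℂ))
    -- {y_n} is a frame:
    (R : X → W) (hR : ∀ (v : X) (n : ℕ), ι (R v) n = y n v)
    (A B : ℝ) (hA : 0 < A) (hB : 0 < B)
    (hframe : ∀ v : X, A * ‖v‖ ≤ ‖R v‖ ∧ ‖R v‖ ≤ B * ‖v‖)
    -- {x_n} is a co-frame:
    (Rc : (X →L[ℂ] ℂ) → (W →L[ℂ] ℂ))
    (hRc : ∀ (g : X →L[ℂ] ℂ) (n : ℕ), Rc g (e n) = g (x n))
    (At Bt : ℝ) (hBt : 0 < Bt)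
    (hcoframe : ∀ g : X →L[ℂ] ℂ, At * ‖g‖ ≤ ‖Rc g‖ ∧ ‖Rc g‖ ≤ Bt * ‖g‖) :
    (∃ T : (X →L[ℂ] ℂ) ≃L[ℂ] (X →L[ℂ] ℂ),
      -- {T y_n} is a frame:
      (∃ R' : X → W,
        (∀ (v : X) (n : ℕ), ι (R' v) n = T (y n) v) ∧
        ∃ A' B' : ℝ, 0 < A' ∧ 0 < B' ∧
          ∀ v : X, A' * ‖v‖ ≤ ‖R' v‖ ∧ ‖R' v‖ ≤ B' * ‖v‖) ∧
      -- and it is alternate dual for {x_n}: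
      (∀ g : X →L[ℂ] ℂ, HasSum (fun n => g (x n) • T (y n)) g)) ↔
    (∃ V : (X →L[ℂ] ℂ) ≃L[ℂ] (X →L[ℂ] ℂ),
      ∀ g : X →L[ℂ] ℂ, HasSum (fun n => g (x n) • y n) (V g)) := by
  constructor
  · rintro ⟨T, -, hdual⟩
    exact ⟨T.symm, fun g => by
      simpa using (T.symm : (X →L[ℂ] ℂ) →L[ℂ] (X →L[ℂ] ℂ)).hasSum (hdual g)⟩
  rintro ⟨V, hV⟩
  have hsummable : ∀ v, Summable fun n => y n v • x n := fun v =>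
    summable_smul_of_dual_bound hRc hBt.le (fun g => (hcoframe g).2)
      (by simpa only [hR] using (hbasis (R v)).summable)
  have hVU : ∀ g v, g (∑' n, y n v • x n) = V g v := fun g v =>
    (g.hasSum (hsummable v).hasSum).unique <| by
      simpa [smul_eq_mul, mul_comm] using (ContinuousLinearMap.apply ℂ ℂ v).hasSum (hV g)
  obtain ⟨U, hUV⟩ := exists_continuousLinearMap_of_dual_apply_eq
    (V : (X →L[ℂ] ℂ) →L[ℂ] (X →L[ℂ] ℂ)) _ hVU
  obtain ⟨S, hS⟩ := exists_continuousLinearEquiv_of_dual_equiv U V hUV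
  have hVsymm := dual_equiv_symm_apply S V (hS ▸ hUV)
  obtain ⟨A', B', hA', hB', hbounds⟩ :=
    exists_bounds_comp_continuousLinearEquiv hA hB hframe S.symm
  refine ⟨V.symm, ⟨fun v => R (S.symm v), fun v n => by rw [hR, hVsymm], A', B', hA', hB', hbounds⟩,
    fun g => ?_⟩
  simpa using (V.symm : (X →L[ℂ] ℂ) →L[ℂ] (X →L[ℂ] ℂ)).hasSum (hV g)

/-- Theorem 7 of the paper: Let {x_n} ⊂ X be a co-frame and
{y_n} ⊂ X* a frame. There exists a bounded invertible T : X* → X* with {T y_n} an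
alternate dual frame for {x_n} (i.e. {T y_n} is a frame and y = Σ y(x_n) T y_n)
iff the operator V y = Σ_n y(x_n) y_n is bounded and invertible on X*. -/
theorem stmt10 {X W : Type*} [NormedAddCommGroup X] [NormedSpace ℂ X] [CompleteSpace X]
    [NormedAddCommGroup W] [NormedSpace ℂ W] [CompleteSpace W]
    (ι : W →ₗ[ℂ] (ℕ → ℂ)) (hι : Function.Injective ι)
    (e : ℕ → W) (he : ∀ n, ι (e n) = fun j => if n = j then (1 : ℂ) else 0)
    (hbasis : ∀ a : W, HasSum (fun n => ι a n • e n) a)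
    (x : ℕ → X) (y : ℕ → (X →L[ℂ] ℂ))
    -- {y_n} is a frame:
    (R : X → W) (hR : ∀ (v : X) (n : ℕ), ι (R v) n = y n v)
    (A B : ℝ) (hA : 0 < A) (hB : 0 < B)
    (hframe : ∀ v : X, A * ‖v‖ ≤ ‖R v‖ ∧ ‖R v‖ ≤ B * ‖v‖)
    -- {x_n} is a co-frame:
    (Rc : (X →L[ℂ] ℂ) → (W →L[ℂ] ℂ))
    (hRc : ∀ (g : X →L[ℂ] ℂ) (n : ℕ), Rc g (e n) = g (x n))
    (At Bt : ℝ) (hAt : 0 < At) (hBt : 0 < Bt)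
    (hcoframe : ∀ g : X →L[ℂ] ℂ, At * ‖g‖ ≤ ‖Rc g‖ ∧ ‖Rc g‖ ≤ Bt * ‖g‖) :
    (∃ T : (X →L[ℂ] ℂ) ≃L[ℂ] (X →L[ℂ] ℂ),
      -- {T y_n} is a frame:
      (∃ R' : X → W,
        (∀ (v : X) (n : ℕ), ι (R' v) n = T (y n) v) ∧
        ∃ A' B' : ℝ, 0 < A' ∧ 0 < B' ∧
          ∀ v : X, A' * ‖v‖ ≤ ‖R' v‖ ∧ ‖R' v‖ ≤ B' * ‖v‖) ∧
      -- and it is alternate dual for {x_n}: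
      (∀ g : X →L[ℂ] ℂ, HasSum (fun n => g (x n) • T (y n)) g)) ↔
    (∃ V : (X →L[ℂ] ℂ) ≃L[ℂ] (X →L[ℂ] ℂ),
      ∀ g : X →L[ℂ] ℂ, HasSum (fun n => g (x n) • y n) (V g)) :=
  stmt10_general ι e hbasis x y R hR A B hA hB hframe Rc hRc At Bt hBt hcoframe
end

section
/- Let S : X_d → X be the synthesis operator and R̃ : X → X_d the analysis operator of a cross-frame, satisfying S R̃ = I_X and R̃ S = I_{X_d} − P where P is a bounded projection onto N = Ker S. For any bounded operator B : X → X, the set of bounded operators A : X_d → X_d with SA = BS is exactly {R̃BS + A₀ : A₀ bounded with A₀(X_d) ⊆ N}. -/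
namespace ContinuousLinearMap

variable {R M N : Type*} [Ring R]
  [TopologicalSpace M] [AddCommGroup M] [Module R M]
  [TopologicalSpace N] [AddCommGroup N] [Module R N]
  {S : M →L[R] N} {Rt : N →L[R] M}

theorem comp_comp_comp_of_rightInverse (hSR : Function.RightInverse Rt S) (B : N →L[R] N) :
    S.comp ((Rt.comp B).comp S) = B.comp S := by
  ext a
  exact hSR (B (S a))

theorem comp_eq_comp_iff_exists_eq_add_of_rightInverse [IsTopologicalAddGroup M]
    (hSR : Function.RightInverse Rt S) (B : N →L[R] N) (A : M →L[R] M) :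
    S.comp A = B.comp S ↔
      ∃ A₀ : M →L[R] M, (∀ a : M, S (A₀ a) = 0) ∧ A = (Rt.comp B).comp S + A₀ := by
  have hlift := comp_comp_comp_of_rightInverse hSR B
  constructor
  · intro hA
    refine ⟨A - (Rt.comp B).comp S, fun a => ?_, by abel⟩
    have hSA : S (A a) = S ((Rt.comp B).comp S a) := congr($hA a).trans congr($hlift a).symm
    simpa [sub_eq_zero] using hSA
  · rintro ⟨A₀, hA₀, rfl⟩
    ext a
    simpa [hA₀] using congr($hlift a)

end ContinuousLinearMap

theorem stmt14_general {W X : Type*} [NormedAddCommGroup W] [NormedSpace ℂ W]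
    [NormedAddCommGroup X] [NormedSpace ℂ X]
    (S : W →L[ℂ] X) (Rt : X →L[ℂ] W)
    (hSR : ∀ v : X, S (Rt v) = v)
    (B : X →L[ℂ] X) :
    ∀ A : W →L[ℂ] W,
      S.comp A = B.comp S ↔
      ∃ A₀ : W →L[ℂ] W, (∀ a : W, S (A₀ a) = 0) ∧
        A = (Rt.comp B).comp S + A₀ :=
  ContinuousLinearMap.comp_eq_comp_iff_exists_eq_add_of_rightInverse hSR B

/-- Theorem 10 of the paper: Let S : X_d → X and R̃ : X → X_d be the
synthesis and analysis operators of a cross-frame, with S R̃ = I_X. For any bounded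
B : X → X, the bounded operators A : X_d → X_d with SA = BS are exactly those of
the form A = R̃BS + A₀ where A₀ is bounded with range contained in Ker S. -/
theorem stmt14 {W X : Type*} [NormedAddCommGroup W] [NormedSpace ℂ W] [CompleteSpace W]
    [NormedAddCommGroup X] [NormedSpace ℂ X] [CompleteSpace X]
    (S : W →L[ℂ] X) (Rt : X →L[ℂ] W)
    (hSR : ∀ v : X, S (Rt v) = v)
    (B : X →L[ℂ] X) :
    ∀ A : W →L[ℂ] W,
      S.comp A = B.comp S ↔
      ∃ A₀ : W →L[ℂ] W, (∀ a : W, S (A₀ a) = 0) ∧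
        A = (Rt.comp B).comp S + A₀ :=
  stmt14_general S Rt hSR B
end
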